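/- arXiv:0905.0059 — 8 statements merged into one kernel-verified Lean document; each statement's English description precedes it below -/
import Mathlib

section
/- A sequence (d_1, …, d_r) of non-negative integers is the Wunram expansion of some integer d with 0 ≤ d < n if and only if both of the following hold: (i) 0 ≤ d_t ≤ b_t − 1 for every t; and (ii) whenever d_s = b_s − 1 and d_t = b_t − 1 for some s < t, there exists l with s < l < t and d_l ≤ b_l − 3. -/
/-!
Write `S m = ∑_{t > m} d_t i_t` for the tail sums, so that `S (m - 1) = d_m i_m + S m` and the
Wunram condition reads `S m < i m` for all `m`. Since `i (m - 1) = b_m i_m - i (m + 1)`, a digit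
`d_m = b_m - 1` gives `S (m - 1) = i (m - 1) - (i m - i (m + 1)) + S m`, so it is admissible only if
`S m < i m - i (m + 1)`; a digit `d_m = b_m - 2` transfers this stronger bound from `m` to `m - 1`,
while a digit `d_m ≤ b_m - 3` produces it. Hence a tail `S m` stays below `i m - i (m + 1)` exactly
when no digit `b - 1` can be reached from `m` through digits `≥ b - 2`, and both directions follow
by downward induction on `m`.
-/

structure IsHJRemainders (r : ℕ) (i b : ℕ → ℤ) : Prop where
  pred_eq : ∀ t, 1 ≤ t → t ≤ r → i (t - 1) = b t * i t - i (t + 1)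
  succ_nonneg_lt : ∀ t, 1 ≤ t → t ≤ r → 0 ≤ i (t + 1) ∧ i (t + 1) < i t

namespace IsHJRemainders

variable {r : ℕ} {i b : ℕ → ℤ}

theorem pos (h : IsHJRemainders r i b) {t : ℕ} (ht : 1 ≤ t) (htr : t ≤ r) : 0 < i t := by
  have := h.succ_nonneg_lt t ht htr
  omega

theorem eq_sub (h : IsHJRemainders r i b) {m : ℕ} (hm : m < r) :
    i m = b (m + 1) * i (m + 1) - i (m + 2) := by
  simpa using h.pred_eq (m + 1) (by omega) hm

end IsHJRemainders

def tailSum (r : ℕ) (dd i : ℕ → ℤ) (m : ℕ) : ℤ :=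
  ∑ t ∈ Finset.Icc (m + 1) r, dd t * i t

/-- The obstruction to the bound `tailSum r dd i m < i m - i (m + 1)`. -/
def HasChainAfter (r : ℕ) (dd b : ℕ → ℤ) (m : ℕ) : Prop :=
  ∃ t, m < t ∧ t ≤ r ∧ dd t = b t - 1 ∧ ∀ l, m < l → l < t → b l - 2 ≤ dd l

section TailSum

variable {r : ℕ} {dd i b : ℕ → ℤ}

@[simp]
theorem tailSum_self : tailSum r dd i r = 0 := by
  simp [tailSum]

theorem tailSum_eq_add {m : ℕ} (hm : m < r) :
    tailSum r dd i m = dd (m + 1) * i (m + 1) + tailSum r dd i (m + 1) := by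
  rw [tailSum, tailSum, Finset.Icc_eq_cons_Ioc (by omega), Finset.sum_cons,
    Finset.Icc_add_one_left_eq_Ioc]

theorem tailSum_nonneg (h : IsHJRemainders r i b) (hdd : ∀ t, 1 ≤ t → t ≤ r → 0 ≤ dd t)
    (m : ℕ) : 0 ≤ tailSum r dd i m :=
  Finset.sum_nonneg fun t ht => by
    rw [Finset.mem_Icc] at ht
    exact mul_nonneg (hdd t (by omega) ht.2) (h.pos (by omega) ht.2).le

theorem digit_lt_of_tailSum_lt (h : IsHJRemainders r i b)
    (hdd : ∀ t, 1 ≤ t → t ≤ r → 0 ≤ dd t) {m : ℕ} (hm : m < r)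
    (hS : tailSum r dd i m < i m) : dd (m + 1) < b (m + 1) := by
  have hsplit := tailSum_eq_add (dd := dd) (i := i) hm
  have hrest := tailSum_nonneg h hdd (m + 1)
  have hrec := h.eq_sub hm
  have hnext := (h.succ_nonneg_lt (m + 1) (by omega) hm).1
  refine lt_of_mul_lt_mul_right ?_ (h.pos (by omega) hm).le
  linarith

theorem HasChainAfter.sub_le_tailSum (h : IsHJRemainders r i b)
    (hdd : ∀ t, 1 ≤ t → t ≤ r → 0 ≤ dd t) {m : ℕ} (hc : HasChainAfter r dd b m) :
    i m - i (m + 1) ≤ tailSum r dd i m := by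
  obtain ⟨t, hmt, htr, hdt, hmid⟩ := hc
  obtain ⟨u, rfl⟩ : ∃ u, t = u + 1 := ⟨t - 1, by omega⟩
  refine Nat.decreasingInduction' (P := fun k => i k - i (k + 1) ≤ tailSum r dd i k)
    (fun k hku hmk ih => ?_) (show m ≤ u by omega) ?_
  · have hdk := hmid (k + 1) (by omega) (by omega)
    have hpos := h.pos (by omega : 1 ≤ k + 1) (by omega)
    have hmul := mul_le_mul_of_nonneg_right hdk hpos.le
    rw [tailSum_eq_add (by omega), h.eq_sub (by omega)]
    linarith
  · have hnext := (h.succ_nonneg_lt (u + 1) (by omega) htr).1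
    have := tailSum_nonneg h hdd (u + 1)
    rw [tailSum_eq_add (by omega), hdt, h.eq_sub (by omega)]
    linarith

theorem not_hasChainAfter_of_tailSum_lt (h : IsHJRemainders r i b)
    (hdd : ∀ t, 1 ≤ t → t ≤ r → 0 ≤ dd t) {m : ℕ} (hd : dd (m + 1) = b (m + 1) - 1)
    (hS : tailSum r dd i m < i m) : ¬ HasChainAfter r dd b (m + 1) := by
  intro hc
  have hmr : m < r := by obtain ⟨t, hmt, htr, -⟩ := hc; omega
  have hchain := hc.sub_le_tailSum h hdd
  rw [tailSum_eq_add hmr, hd, h.eq_sub hmr] at hS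
  linarith

theorem gapCondition_iff :
    (∀ s t, 1 ≤ s → s < t → t ≤ r → dd s = b s - 1 → dd t = b t - 1 →
        ∃ l, s < l ∧ l < t ∧ dd l ≤ b l - 3) ↔
      ∀ s, 1 ≤ s → dd s = b s - 1 → ¬ HasChainAfter r dd b s := by
  constructor
  · rintro hgap s hs hds ⟨t, hst, htr, hdt, hmid⟩
    obtain ⟨l, hsl, hlt, hdl⟩ := hgap s t hs hst htr hds hdt
    have := hmid l hsl hlt
    omega
  · intro hchain s t hs hst htr hds hdt
    by_contra! hno
    exact hchain s hs hds ⟨t, hst, htr, hdt, fun l hsl hlt => by have := hno l hsl hlt; omega⟩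

theorem tailSum_lt_of_succ (h : IsHJRemainders r i b)
    (hbd : ∀ t, 1 ≤ t → t ≤ r → dd t ≤ b t - 1)
    (hchain : ∀ s, 1 ≤ s → dd s = b s - 1 → ¬ HasChainAfter r dd b s) {m : ℕ} (hm : m < r)
    (ih : tailSum r dd i (m + 1) < i (m + 1))
    (ih' : ¬ HasChainAfter r dd b (m + 1) → tailSum r dd i (m + 1) < i (m + 1) - i (m + 2)) :
    tailSum r dd i m < i m ∧
      (¬ HasChainAfter r dd b m → tailSum r dd i m < i m - i (m + 1)) := by
  have hpos := h.pos (by omega : 1 ≤ m + 1) hm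
  have hnext := (h.succ_nonneg_lt (m + 1) (by omega) hm).2
  have hdb := hbd (m + 1) (by omega) hm
  rw [tailSum_eq_add hm, h.eq_sub hm]
  by_cases hd1 : dd (m + 1) = b (m + 1) - 1
  · have hS := ih' (hchain (m + 1) (by omega) hd1)
    refine ⟨by rw [hd1]; linarith, fun hno => absurd ?_ hno⟩
    exact ⟨m + 1, by omega, hm, hd1, fun l hl hl' => by omega⟩
  have hmul := mul_le_mul_of_nonneg_right (show dd (m + 1) ≤ b (m + 1) - 2 by omega) hpos.le
  refine ⟨by linarith, fun hno => ?_⟩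
  by_cases hd3 : dd (m + 1) ≤ b (m + 1) - 3
  · have hmul3 := mul_le_mul_of_nonneg_right hd3 hpos.le
    linarith
  · have hno' : ¬ HasChainAfter r dd b (m + 1) := by
      rintro ⟨t, hmt, htr, hdt, hmid⟩
      refine hno ⟨t, by omega, htr, hdt, fun l hml hlt => ?_⟩
      rcases (show l = m + 1 ∨ m + 1 < l by omega) with rfl | hl
      · omega
      · exact hmid l hl hlt
    linarith [ih' hno']

theorem tailSum_lt_of_digits (h : IsHJRemainders r i b) (hr : 1 ≤ r)
    (hbd : ∀ t, 1 ≤ t → t ≤ r → dd t ≤ b t - 1)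
    (hchain : ∀ s, 1 ≤ s → dd s = b s - 1 → ¬ HasChainAfter r dd b s) {m : ℕ} (hm : m ≤ r) :
    tailSum r dd i m < i m := by
  suffices tailSum r dd i m < i m ∧
      (¬ HasChainAfter r dd b m → tailSum r dd i m < i m - i (m + 1)) from this.1
  induction hm using Nat.decreasingInduction with
  | self =>
    have := h.succ_nonneg_lt r hr le_rfl
    simp only [tailSum_self]
    exact ⟨h.pos hr le_rfl, fun _ => by omega⟩
  | of_succ k hk ih => exact tailSum_lt_of_succ h hbd hchain hk ih.1 ih.2

end TailSum

theorem stmt_2_general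
    (n : ℤ) (r : ℕ)
    (hr : 1 ≤ r)
    (i b : ℕ → ℤ)
    (hi0 : i 0 = n)
    (hrec : ∀ t, 1 ≤ t → t ≤ r → i (t - 1) = b t * i t - i (t + 1))
    (hlt : ∀ t, 1 ≤ t → t ≤ r → 0 ≤ i (t + 1) ∧ i (t + 1) < i t)
    (dd : ℕ → ℤ)
    (hddnn : ∀ t, 1 ≤ t → t ≤ r → 0 ≤ dd t) :
    (∃ d : ℤ, 0 ≤ d ∧ d < n ∧
      d = ∑ t ∈ Finset.Icc 1 r, dd t * i t ∧
      (∀ t0, t0 ≤ r →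
        0 ≤ ∑ t ∈ Finset.Icc (t0 + 1) r, dd t * i t ∧
        ∑ t ∈ Finset.Icc (t0 + 1) r, dd t * i t < i t0)) ↔
    ((∀ t, 1 ≤ t → t ≤ r → dd t ≤ b t - 1) ∧
      (∀ s t, 1 ≤ s → s < t → t ≤ r → dd s = b s - 1 → dd t = b t - 1 →
        ∃ l, s < l ∧ l < t ∧ dd l ≤ b l - 3)) := by
  have h : IsHJRemainders r i b := ⟨hrec, hlt⟩
  rw [gapCondition_iff]
  constructor
  · rintro ⟨-, -, -, -, hS⟩
    refine ⟨fun t ht htr => ?_, fun s hs hds => ?_⟩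
    · obtain ⟨m, rfl⟩ : ∃ m, t = m + 1 := ⟨t - 1, by omega⟩
      have := digit_lt_of_tailSum_lt h hddnn htr (hS m (by omega)).2
      omega
    · obtain ⟨m, rfl⟩ : ∃ m, s = m + 1 := ⟨s - 1, by omega⟩
      by_cases hm : m ≤ r
      · exact not_hasChainAfter_of_tailSum_lt h hddnn hds (hS m hm).2
      · rintro ⟨t, hst, htr, -⟩
        omega
  · rintro ⟨hbd, hchain⟩
    have hS := fun m (hm : m ≤ r) => tailSum_lt_of_digits h hr hbd hchain hm
    refine ⟨tailSum r dd i 0, tailSum_nonneg h hddnn 0, hi0 ▸ hS 0 (Nat.zero_le r), rfl,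
      fun t0 ht0 => ⟨tailSum_nonneg h hddnn t0, hS t0 ht0⟩⟩

/-- Characterization of Wunram expansions (Wunram's Lemma 1). -/
theorem stmt_2
    (n q : ℤ) (r : ℕ)
    (hq : 0 < q) (hqn : q < n) (hcop : IsCoprime q n)
    (hr : 1 ≤ r)
    (i b : ℕ → ℤ)
    (hi0 : i 0 = n) (hi1 : i 1 = q)
    (hrec : ∀ t, 1 ≤ t → t ≤ r → i (t - 1) = b t * i t - i (t + 1))
    (hlt : ∀ t, 1 ≤ t → t ≤ r → 0 ≤ i (t + 1) ∧ i (t + 1) < i t)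
    (hir : i r = 1) (hir1 : i (r + 1) = 0)
    (dd : ℕ → ℤ)
    (hddnn : ∀ t, 1 ≤ t → t ≤ r → 0 ≤ dd t) :
    (∃ d : ℤ, 0 ≤ d ∧ d < n ∧
      d = ∑ t ∈ Finset.Icc 1 r, dd t * i t ∧
      (∀ t0, t0 ≤ r →
        0 ≤ ∑ t ∈ Finset.Icc (t0 + 1) r, dd t * i t ∧
        ∑ t ∈ Finset.Icc (t0 + 1) r, dd t * i t < i t0)) ↔
    ((∀ t, 1 ≤ t → t ≤ r → dd t ≤ b t - 1) ∧
      (∀ s t, 1 ≤ s → s < t → t ≤ r → dd s = b s - 1 → dd t = b t - 1 →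
        ∃ l, s < l ∧ l < t ∧ dd l ≤ b l - 3)) :=
  stmt_2_general n r hr i b hi0 hrec hlt dd hddnn
end

section
/- The dual sequence satisfies: 0 = j_0 < j_1 < j_2 < ⋯ < j_{r+1}; j_{r+1} = n; and 0 < j_r < n with q·j_r ≡ 1 (mod n), i.e. j_r is the inverse q' of q modulo n lying in {1, …, n−1}. -/
/-!
The remainders `i` and the dual sequence `j` solve the same three-term recurrence
`x (t + 1) = b t * x t - x (t - 1)`. Since `b t ≥ 2` (the remainders decrease), `j` is convex and
hence strictly increasing. The Casoratian `i t * j (t + 1) - i (t + 1) * j t` of two solutions is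
constant, equal to `n` at `t = 0`, which at `t = r` reads `j (r + 1) = n`. Finally `q * j` and `i`
are solutions that agree modulo `n` at `t = 0, 1`, hence everywhere, and at `t = r` this is
`q * j r ≡ i r = 1`.
-/

namespace HirzebruchJung

def SolvesRecurrence (b : ℕ → ℤ) (r : ℕ) (x : ℕ → ℤ) : Prop :=
  ∀ t, 1 ≤ t → t ≤ r → x (t + 1) = b t * x t - x (t - 1)

namespace SolvesRecurrence

variable {b : ℕ → ℤ} {r : ℕ} {x y : ℕ → ℤ}

theorem const_mul (hx : SolvesRecurrence b r x) (c : ℤ) :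
    SolvesRecurrence b r fun t => c * x t := fun t h1 h2 => by
  simp only [hx t h1 h2]; ring

theorem casoratian_eq (hx : SolvesRecurrence b r x) (hy : SolvesRecurrence b r y) :
    ∀ t ≤ r, x t * y (t + 1) - x (t + 1) * y t = x 0 * y 1 - x 1 * y 0 := by
  intro t
  induction t with
  | zero => intro _; rfl
  | succ s ih =>
    intro hs
    have hxs := hx (s + 1) (by omega) hs
    have hys := hy (s + 1) (by omega) hs
    rw [Nat.add_sub_cancel] at hxs hys
    rw [hxs, hys, ← ih (by omega)]
    ring

theorem modEq {n : ℤ} (hx : SolvesRecurrence b r x) (hy : SolvesRecurrence b r y)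
    (h0 : x 0 ≡ y 0 [ZMOD n]) (h1 : x 1 ≡ y 1 [ZMOD n]) :
    ∀ t ≤ r + 1, x t ≡ y t [ZMOD n] := by
  have key : ∀ t ≤ r, x t ≡ y t [ZMOD n] ∧ x (t + 1) ≡ y (t + 1) [ZMOD n] := by
    intro t
    induction t with
    | zero => exact fun _ => ⟨h0, h1⟩
    | succ s ih =>
      intro hs
      obtain ⟨hs0, hs1⟩ := ih (by omega)
      refine ⟨hs1, ?_⟩
      rw [hx (s + 1) (by omega) hs, hy (s + 1) (by omega) hs, Nat.add_sub_cancel]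
      exact (hs1.mul_left _).sub hs0
  intro t ht
  rcases t with _ | t
  · exact h0
  · exact (key t (by omega)).2

/-- With `b ≥ 2` the increments `x (t + 1) - x t` of a nonnegative solution never decrease. -/
theorem strictMonoOn (hx : SolvesRecurrence b r x) (hb : ∀ t, 1 ≤ t → t ≤ r → 2 ≤ b t)
    (h0 : 0 ≤ x 0) (h01 : x 0 < x 1) : StrictMonoOn x (Set.Iic (r + 1)) := by
  have key : ∀ t ≤ r, 0 ≤ x t ∧ x t < x (t + 1) := by
    intro t
    induction t with
    | zero => exact fun _ => ⟨h0, h01⟩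
    | succ s ih =>
      intro hs
      obtain ⟨hs0, hs1⟩ := ih (by omega)
      have hrec := hx (s + 1) (by omega) hs
      rw [Nat.add_sub_cancel] at hrec
      have hbs := hb (s + 1) (by omega) hs
      refine ⟨by omega, ?_⟩
      nlinarith
  exact strictMonoOn_Iic_of_lt_succ fun t ht => (key t (Nat.lt_succ_iff.mp ht)).2

end SolvesRecurrence

theorem two_le_of_eq_mul_sub {a c d k : ℤ} (hc : 0 < c) (hca : c < a) (hd : 0 ≤ d)
    (h : a = k * c - d) : 2 ≤ k := by
  by_contra! hk
  nlinarith

end HirzebruchJung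

open HirzebruchJung

theorem stmt_3_general
    (n q : ℤ) (r : ℕ)
    (hqn : q < n)
    (hr : 1 ≤ r)
    (i b : ℕ → ℤ)
    (hi0 : i 0 = n) (hi1 : i 1 = q)
    (hrec : ∀ t, 1 ≤ t → t ≤ r → i (t - 1) = b t * i t - i (t + 1))
    (hlt : ∀ t, 1 ≤ t → t ≤ r → 0 ≤ i (t + 1) ∧ i (t + 1) < i t)
    (hir : i r = 1) (hir1 : i (r + 1) = 0)
    (j : ℕ → ℤ) (hj0 : j 0 = 0) (hj1 : j 1 = 1)
    (hjrec : ∀ t, 1 ≤ t → t ≤ r → j (t + 1) = b t * j t - j (t - 1)) :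
    j 0 = 0 ∧
    (∀ t, t ≤ r → j t < j (t + 1)) ∧
    j (r + 1) = n ∧
    0 < j r ∧ j r < n ∧
    Int.ModEq n (q * j r) 1 := by
  have hi_anti : StrictAntiOn i (Set.Iic r) := strictAntiOn_Iic_of_succ_lt fun t ht => by
    rcases t with _ | t
    · simpa [hi0, hi1] using hqn
    · exact (hlt (t + 1) (by omega) ht.le).2
  have hi_pos : ∀ t ≤ r, 0 < i t := fun t ht => by
    have := hi_anti.antitoneOn (Set.mem_Iic.mpr ht) Set.self_mem_Iic ht
    omega
  have hb : ∀ t, 1 ≤ t → t ≤ r → 2 ≤ b t := fun t h1 h2 =>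
    two_le_of_eq_mul_sub (hi_pos t h2)
      (hi_anti (Set.mem_Iic.mpr (by omega)) (Set.mem_Iic.mpr h2) (by omega))
      (hlt t h1 h2).1 (hrec t h1 h2)
  have hi_rec : SolvesRecurrence b r i := fun t h1 h2 => by linarith [hrec t h1 h2]
  have hj_rec : SolvesRecurrence b r j := hjrec
  have hj_mono := hj_rec.strictMonoOn hb (by omega) (by omega)
  have hj_succ : ∀ t ≤ r, j t < j (t + 1) := fun t ht =>
    hj_mono (Set.mem_Iic.mpr (by omega)) (Set.mem_Iic.mpr (by omega)) (Nat.lt_succ_self t)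
  have hjr1 : j (r + 1) = n := by
    simpa [hir, hir1, hi0, hi1, hj0, hj1] using hi_rec.casoratian_eq hj_rec r le_rfl
  have hqj : q * j r ≡ i r [ZMOD n] :=
    (hj_rec.const_mul q).modEq hi_rec (by simp [hj0, hi0, Int.ModEq]) (by simp [hj1, hi1])
      r (by omega)
  refine ⟨hj0, hj_succ, hjr1, ?_, hjr1 ▸ hj_succ r le_rfl, hir ▸ hqj⟩
  exact hj0 ▸ hj_mono (Set.mem_Iic.mpr (by omega)) (Set.mem_Iic.mpr (by omega)) (by omega)

/-- Properties of the dual sequence. -/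
theorem stmt_3
    (n q : ℤ) (r : ℕ)
    (hq : 0 < q) (hqn : q < n) (hcop : IsCoprime q n)
    (hr : 1 ≤ r)
    (i b : ℕ → ℤ)
    (hi0 : i 0 = n) (hi1 : i 1 = q)
    (hrec : ∀ t, 1 ≤ t → t ≤ r → i (t - 1) = b t * i t - i (t + 1))
    (hlt : ∀ t, 1 ≤ t → t ≤ r → 0 ≤ i (t + 1) ∧ i (t + 1) < i t)
    (hir : i r = 1) (hir1 : i (r + 1) = 0)
    (j : ℕ → ℤ) (hj0 : j 0 = 0) (hj1 : j 1 = 1)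
    (hjrec : ∀ t, 1 ≤ t → t ≤ r → j (t + 1) = b t * j t - j (t - 1)) :
    j 0 = 0 ∧
    (∀ t, t ≤ r → j t < j (t + 1)) ∧
    j (r + 1) = n ∧
    0 < j r ∧ j r < n ∧
    Int.ModEq n (q * j r) 1 :=
  stmt_3_general n q r hqn hr i b hi0 hi1 hrec hlt hir hir1 j hj0 hj1 hjrec
end

section
/- Let d be an integer with 0 ≤ d < n, let (d_1, …, d_r) be its Wunram expansion, and put f = Σ_{t=1}^r d_t·j_t. Then q·f ≡ d (mod n). -/
/-!
Both `i` and `j` satisfy the recurrence `x (t + 1) = b t * x t - x (t - 1)`, hence so does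
`i - q * j`. Its first two terms are `n` and `0`, so it vanishes modulo `n`, i.e. `q * j t ≡ i t`.
Multiplying by the Wunram digits and summing gives `q * f ≡ d`.
-/

theorem dvd_of_dvd_of_recurrence {R : Type*} [CommRing R] {m : R} {b u : ℕ → R} {r : ℕ}
    (h0 : m ∣ u 0) (h1 : m ∣ u 1)
    (hrec : ∀ t, 1 ≤ t → t ≤ r → u (t + 1) = b t * u t - u (t - 1)) :
    ∀ t ≤ r + 1, m ∣ u t := by
  suffices h : ∀ t ≤ r, m ∣ u t ∧ m ∣ u (t + 1) from fun t ht => by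
    rcases t with _ | t
    · exact h0
    · exact (h t (by omega)).2
  intro t ht
  induction t with
  | zero => exact ⟨h0, h1⟩
  | succ t ih =>
    obtain ⟨hprev, hcur⟩ := ih (by omega)
    refine ⟨hcur, ?_⟩
    rw [hrec (t + 1) (by omega) ht, Nat.add_sub_cancel]
    exact dvd_sub (dvd_mul_of_dvd_right hcur _) hprev

theorem mul_modEq_of_recurrence {n q : ℤ} {r : ℕ} {b i j : ℕ → ℤ}
    (hi0 : i 0 = n) (hi1 : i 1 = q) (hj0 : j 0 = 0) (hj1 : j 1 = 1)
    (hi : ∀ t, 1 ≤ t → t ≤ r → i (t + 1) = b t * i t - i (t - 1))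
    (hj : ∀ t, 1 ≤ t → t ≤ r → j (t + 1) = b t * j t - j (t - 1)) :
    ∀ t ≤ r + 1, q * j t ≡ i t [ZMOD n] := by
  intro t ht
  rw [Int.modEq_iff_dvd]
  refine dvd_of_dvd_of_recurrence (b := b) (u := fun t => i t - q * j t) ?_ ?_ ?_ t ht
  · simp [hi0, hj0]
  · simp [hi1, hj1]
  · intro t h1 h2
    linear_combination hi t h1 h2 - q * hj t h1 h2

theorem stmt_5_general
    (n q : ℤ) (r : ℕ)
    (i b : ℕ → ℤ)
    (hi0 : i 0 = n) (hi1 : i 1 = q)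
    (hrec : ∀ t, 1 ≤ t → t ≤ r → i (t - 1) = b t * i t - i (t + 1))
    (j : ℕ → ℤ) (hj0 : j 0 = 0) (hj1 : j 1 = 1)
    (hjrec : ∀ t, 1 ≤ t → t ≤ r → j (t + 1) = b t * j t - j (t - 1))
    (d : ℤ)
    (dd : ℕ → ℤ)
    (hdsum : d = ∑ t ∈ Finset.Icc 1 r, dd t * i t) :
    Int.ModEq n (q * ∑ t ∈ Finset.Icc 1 r, dd t * j t) d := by
  have hi : ∀ t, 1 ≤ t → t ≤ r → i (t + 1) = b t * i t - i (t - 1) := fun t h1 h2 => by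
    linarith [hrec t h1 h2]
  have hqj := mul_modEq_of_recurrence hi0 hi1 hj0 hj1 hi hjrec
  rw [hdsum, Finset.mul_sum]
  refine Int.ModEq.sum fun t ht => ?_
  rw [mul_left_comm]
  exact (hqj t (by grind)).mul_left _

/-- q·f ≡ d (mod n) where f = Σ d_t·j_t (Wunram's Lemma 2). -/
theorem stmt_5
    (n q : ℤ) (r : ℕ)
    (hq : 0 < q) (hqn : q < n) (hcop : IsCoprime q n)
    (hr : 1 ≤ r)
    (i b : ℕ → ℤ)
    (hi0 : i 0 = n) (hi1 : i 1 = q)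
    (hrec : ∀ t, 1 ≤ t → t ≤ r → i (t - 1) = b t * i t - i (t + 1))
    (hlt : ∀ t, 1 ≤ t → t ≤ r → 0 ≤ i (t + 1) ∧ i (t + 1) < i t)
    (hir : i r = 1) (hir1 : i (r + 1) = 0)
    (j : ℕ → ℤ) (hj0 : j 0 = 0) (hj1 : j 1 = 1)
    (hjrec : ∀ t, 1 ≤ t → t ≤ r → j (t + 1) = b t * j t - j (t - 1))
    (d : ℤ) (hd0 : 0 ≤ d) (hdn : d < n)
    (dd : ℕ → ℤ)
    (hddnn : ∀ t, 1 ≤ t → t ≤ r → 0 ≤ dd t)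
    (hdsum : d = ∑ t ∈ Finset.Icc 1 r, dd t * i t)
    (hdtail : ∀ t0, t0 ≤ r →
      0 ≤ ∑ t ∈ Finset.Icc (t0 + 1) r, dd t * i t ∧
      ∑ t ∈ Finset.Icc (t0 + 1) r, dd t * i t < i t0) :
    Int.ModEq n (q * ∑ t ∈ Finset.Icc 1 r, dd t * j t) d :=
  stmt_5_general n q r i b hi0 hi1 hrec j hj0 hj1 hjrec d dd hdsum
end

section
/- For every s ∈ {0, 1, …, r}, q·j_s ≡ i_s (mod n). -/
/-! The sequences `q * j` and `i` obey the same recurrence `x (t + 1) = b t * x t - x (t - 1)` and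
agree modulo `n` at `0` (as `0 ≡ n`) and at `1` (both are `q`), hence agree modulo `n` throughout. -/

theorem Int.ModEq.of_threeTermRecurrence {n : ℤ} {r : ℕ} {b x y : ℕ → ℤ}
    (hx : ∀ t < r, x (t + 2) = b (t + 1) * x (t + 1) - x t)
    (hy : ∀ t < r, y (t + 2) = b (t + 1) * y (t + 1) - y t)
    (h0 : x 0 ≡ y 0 [ZMOD n]) (h1 : x 1 ≡ y 1 [ZMOD n]) :
    ∀ s ≤ r + 1, x s ≡ y s [ZMOD n] := by
  have hpair : ∀ s ≤ r, x s ≡ y s [ZMOD n] ∧ x (s + 1) ≡ y (s + 1) [ZMOD n] := by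
    intro s hs
    induction s with
    | zero => exact ⟨h0, h1⟩
    | succ t ih =>
      obtain ⟨ht, ht1⟩ := ih (by omega)
      refine ⟨ht1, ?_⟩
      rw [hx t (by omega), hy t (by omega)]
      exact (ht1.mul_left _).sub ht
  intro s hs
  cases s with
  | zero => exact h0
  | succ s => exact (hpair s (by omega)).2

theorem stmt_6_general
    (n q : ℤ) (r : ℕ)
    (i b : ℕ → ℤ)
    (hi0 : i 0 = n) (hi1 : i 1 = q)
    (hrec : ∀ t, 1 ≤ t → t ≤ r → i (t - 1) = b t * i t - i (t + 1))
    (j : ℕ → ℤ) (hj0 : j 0 = 0) (hj1 : j 1 = 1)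
    (hjrec : ∀ t, 1 ≤ t → t ≤ r → j (t + 1) = b t * j t - j (t - 1)) :
    ∀ s, s ≤ r → Int.ModEq n (q * j s) (i s) := by
  have hqj : ∀ t < r, q * j (t + 2) = b (t + 1) * (q * j (t + 1)) - q * j t := by
    intro t ht
    rw [hjrec (t + 1) (by omega) (by omega), Nat.add_sub_cancel]
    ring
  have hi : ∀ t < r, i (t + 2) = b (t + 1) * i (t + 1) - i t := by
    intro t ht
    have h := hrec (t + 1) (by omega) (by omega)
    rw [Nat.add_sub_cancel] at h
    linarith
  have h0 : q * j 0 ≡ i 0 [ZMOD n] := by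
    rw [hj0, hi0, mul_zero]
    exact (Int.emod_self).symm
  have h1 : q * j 1 ≡ i 1 [ZMOD n] := by rw [hj1, hi1, mul_one]
  intro s hs
  exact Int.ModEq.of_threeTermRecurrence (x := fun t => q * j t) hqj hi h0 h1 s (by omega)

/-- q·j_s ≡ i_s (mod n) for all 0 ≤ s ≤ r. -/
theorem stmt_6
    (n q : ℤ) (r : ℕ)
    (hq : 0 < q) (hqn : q < n) (hcop : IsCoprime q n)
    (hr : 1 ≤ r)
    (i b : ℕ → ℤ)
    (hi0 : i 0 = n) (hi1 : i 1 = q)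
    (hrec : ∀ t, 1 ≤ t → t ≤ r → i (t - 1) = b t * i t - i (t + 1))
    (hlt : ∀ t, 1 ≤ t → t ≤ r → 0 ≤ i (t + 1) ∧ i (t + 1) < i t)
    (hir : i r = 1) (hir1 : i (r + 1) = 0)
    (j : ℕ → ℤ) (hj0 : j 0 = 0) (hj1 : j 1 = 1)
    (hjrec : ∀ t, 1 ≤ t → t ≤ r → j (t + 1) = b t * j t - j (t - 1)) :
    ∀ s, s ≤ r → Int.ModEq n (q * j s) (i s) :=
  stmt_6_general n q r i b hi0 hi1 hrec j hj0 hj1 hjrec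
end

section
/- For every t ∈ {2, …, r+1} and all integers a, b with 0 ≤ a < i_{t−1} − i_t and 0 ≤ b < j_t − j_{t−1}, the integer i_{t−1} + a + b·q is special if and only if a = 0 and b = 0. -/
/-!
Put `v_u = (i_u, j_u)`. Every `v_u` lies in the lattice `L = {(x, y) | x ≡ q y [ZMOD n]}`, and
consecutive vectors `v_w, v_{w+1}` have determinant `n`, so they form a basis of `L`. Since the
determinants `det (v_w, x)` change sign along `w` for `x` in the first quadrant, every point of
`L` in the closed first quadrant is a nonnegative combination of some consecutive pair. As `i`
decreases and `j` increases, the only such point in the box `[0, i_σ) × [0, j_{σ+1})` is `0`.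
A congruence `i_σ + a + b q ≡ i_s` yields, after shifting by suitable `v_u`, a point of `L` in
this box, which forces `a = b = 0`.
-/

open Set

def HJRecurrence (b : ℕ → ℤ) (r : ℕ) (x : ℕ → ℤ) : Prop :=
  ∀ t, 1 ≤ t → t ≤ r → x (t + 1) = b t * x t - x (t - 1)

namespace HJRecurrence

variable {b x y : ℕ → ℤ} {r : ℕ}

theorem mul_sub (c : ℤ) (hx : HJRecurrence b r x) (hy : HJRecurrence b r y) :
    HJRecurrence b r (fun u => c * x u - y u) := fun t h1 h2 => by
  simp only [hx t h1 h2, hy t h1 h2]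
  ring

theorem casoratian_eq (hx : HJRecurrence b r x) (hy : HJRecurrence b r y) :
    ∀ u ≤ r, x u * y (u + 1) - x (u + 1) * y u = x 0 * y 1 - x 1 * y 0 := by
  intro u
  induction u with
  | zero => intro _; rfl
  | succ w ih =>
    intro hw
    rw [hx (w + 1) (by omega) hw, hy (w + 1) (by omega) hw, ← ih (by omega), Nat.add_sub_cancel]
    ring

theorem dvd {n : ℤ} (hx : HJRecurrence b r x) (h0 : n ∣ x 0) (h1 : n ∣ x 1) :
    ∀ u ≤ r + 1, n ∣ x u := by
  have hpair : ∀ u ≤ r, n ∣ x u ∧ n ∣ x (u + 1) := by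
    intro u
    induction u with
    | zero => exact fun _ => ⟨h0, h1⟩
    | succ w ih =>
      intro hw
      obtain ⟨hw0, hw1⟩ := ih (by omega)
      refine ⟨hw1, ?_⟩
      rw [hx (w + 1) (by omega) hw, Nat.add_sub_cancel]
      exact (hw1.mul_left _).sub hw0
  intro u hu
  rcases u with _ | w
  · exact h0
  · exact (hpair w (by omega)).2

end HJRecurrence

/-- Cramer's rule in the lattice `{(x₁, x₂) | n ∣ q x₂ - x₁}` for a basis `u, v` of determinant
`n`: the coordinates of `x` are `det (x, v) / n` and `det (u, x) / n`. -/
theorem exists_nonneg_combination_of_det_eq {n q x₁ x₂ u₁ u₂ v₁ v₂ : ℤ} (hn : 0 < n)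
    (hdet : u₁ * v₂ - v₁ * u₂ = n) (hu : n ∣ q * u₂ - u₁) (hv : n ∣ q * v₂ - v₁)
    (hx : n ∣ q * x₂ - x₁) (hxv : 0 ≤ x₁ * v₂ - x₂ * v₁) (hux : 0 ≤ u₁ * x₂ - u₂ * x₁) :
    ∃ α β : ℤ, 0 ≤ α ∧ 0 ≤ β ∧ x₁ = α * u₁ + β * v₁ ∧ x₂ = α * u₂ + β * v₂ := by
  obtain ⟨α, hα⟩ : n ∣ x₁ * v₂ - x₂ * v₁ := by
    rw [show x₁ * v₂ - x₂ * v₁ = x₂ * (q * v₂ - v₁) - v₂ * (q * x₂ - x₁) by ring]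
    exact (hv.mul_left x₂).sub (hx.mul_left v₂)
  obtain ⟨β, hβ⟩ : n ∣ u₁ * x₂ - u₂ * x₁ := by
    rw [show u₁ * x₂ - u₂ * x₁ = u₂ * (q * x₂ - x₁) - x₂ * (q * u₂ - u₁) by ring]
    exact (hx.mul_left u₂).sub (hu.mul_left x₂)
  refine ⟨α, β, (mul_nonneg_iff_of_pos_left hn).1 (hα ▸ hxv),
    (mul_nonneg_iff_of_pos_left hn).1 (hβ ▸ hux), ?_, ?_⟩
  · refine mul_left_cancel₀ hn.ne' ?_
    linear_combination -x₁ * hdet + u₁ * hα + v₁ * hβ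
  · refine mul_left_cancel₀ hn.ne' ?_
    linear_combination -x₂ * hdet + u₂ * hα + v₂ * hβ

structure HJData (n q : ℤ) (r : ℕ) (i b j : ℕ → ℤ) : Prop where
  i_zero : i 0 = n
  i_one : i 1 = q
  q_lt : q < n
  i_rec : HJRecurrence b r i
  i_succ_lt : ∀ t, 1 ≤ t → t ≤ r → i (t + 1) < i t
  i_last : i (r + 1) = 0
  j_zero : j 0 = 0
  j_one : j 1 = 1
  j_rec : HJRecurrence b r j

namespace HJData

variable {n q : ℤ} {r : ℕ} {i b j : ℕ → ℤ} (h : HJData n q r i b j)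
include h

theorem strictAntiOn_i : StrictAntiOn i (Iic (r + 1)) :=
  strictAntiOn_Iic_of_succ_lt fun u hu => by
    rcases u with _ | u
    · simpa [h.i_zero, h.i_one] using h.q_lt
    · exact h.i_succ_lt (u + 1) (by omega) (by omega)

theorem i_lt_i {u v : ℕ} (huv : u < v) (hv : v ≤ r + 1) : i v < i u :=
  h.strictAntiOn_i (mem_Iic.2 (by omega)) (mem_Iic.2 hv) huv

theorem i_le_i {u v : ℕ} (huv : u ≤ v) (hv : v ≤ r + 1) : i v ≤ i u :=
  h.strictAntiOn_i.antitoneOn (mem_Iic.2 (by omega)) (mem_Iic.2 hv) huv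

theorem i_nonneg {u : ℕ} (hu : u ≤ r + 1) : 0 ≤ i u :=
  h.i_last ▸ h.i_le_i hu le_rfl

theorem i_pos {u : ℕ} (hu : u ≤ r) : 0 < i u :=
  h.i_last ▸ h.i_lt_i (Nat.lt_succ_of_le hu) le_rfl

theorem n_pos : 0 < n :=
  h.i_zero ▸ h.i_pos (Nat.zero_le r)

theorem two_le_b {t : ℕ} (ht1 : 1 ≤ t) (htr : t ≤ r) : 2 ≤ b t := by
  have hrec := h.i_rec t ht1 htr
  have hlt := h.i_lt_i (u := t - 1) (v := t) (by omega) (by omega)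
  have hit := h.i_pos htr
  have hit1 := h.i_nonneg (u := t + 1) (by omega)
  by_contra! hb
  nlinarith

theorem j_nonneg_lt_succ : ∀ u ≤ r, 0 ≤ j u ∧ j u < j (u + 1) := by
  intro u
  induction u with
  | zero => intro _; simp [h.j_zero, h.j_one]
  | succ w ih =>
    intro hw
    obtain ⟨hw0, hw1⟩ := ih (by omega)
    have hrec := h.j_rec (w + 1) (by omega) hw
    rw [Nat.add_sub_cancel] at hrec
    have hb := h.two_le_b (t := w + 1) (by omega) hw
    refine ⟨by omega, ?_⟩
    nlinarith

theorem strictMonoOn_j : StrictMonoOn j (Iic (r + 1)) :=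
  strictMonoOn_Iic_of_lt_succ fun u hu => (h.j_nonneg_lt_succ u (by omega)).2

theorem j_le_j {u v : ℕ} (huv : u ≤ v) (hv : v ≤ r + 1) : j u ≤ j v :=
  h.strictMonoOn_j.monotoneOn (mem_Iic.2 (by omega)) (mem_Iic.2 hv) huv

theorem j_nonneg {u : ℕ} (hu : u ≤ r + 1) : 0 ≤ j u :=
  h.j_zero ▸ h.j_le_j (Nat.zero_le u) hu

theorem det_eq {u : ℕ} (hu : u ≤ r) : i u * j (u + 1) - i (u + 1) * j u = n := by
  rw [h.i_rec.casoratian_eq h.j_rec u hu, h.i_zero, h.i_one, h.j_zero, h.j_one]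
  ring

theorem dvd_mul_j_sub_i {u : ℕ} (hu : u ≤ r + 1) : n ∣ q * j u - i u :=
  (h.j_rec.mul_sub q h.i_rec).dvd (by simp [h.j_zero, h.i_zero]) (by simp [h.j_one, h.i_one]) u hu

/-- Take the last `w ≤ r` with `det (v_w, x) ≥ 0`; this holds at `w = 0` since `v_0 = (n, 0)`,
and `det (x, v_{w+1}) ≥ 0` either by maximality of `w` or because `i (r + 1) = 0`. -/
theorem exists_nonneg_combination {x₁ x₂ : ℤ} (hx : n ∣ q * x₂ - x₁) (hx₁ : 0 ≤ x₁)
    (hx₂ : 0 ≤ x₂) : ∃ w ≤ r, ∃ α β : ℤ, 0 ≤ α ∧ 0 ≤ β ∧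
      x₁ = α * i w + β * i (w + 1) ∧ x₂ = α * j w + β * j (w + 1) := by
  classical
  let P : ℕ → Prop := fun w => 0 ≤ i w * x₂ - j w * x₁
  have hP0 : P 0 := by
    simp only [P, h.i_zero, h.j_zero, zero_mul, sub_zero]
    exact mul_nonneg h.n_pos.le hx₂
  set w := Nat.findGreatest P r
  have hwr : w ≤ r := Nat.findGreatest_le r
  have hnext : 0 ≤ x₁ * j (w + 1) - x₂ * i (w + 1) := by
    rcases hwr.lt_or_eq with hw | hw
    · have : ¬ P (w + 1) := Nat.findGreatest_is_greatest (Nat.lt_succ_self w) hw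
      simp only [P, not_le] at this
      linarith
    · rw [hw, h.i_last]
      simpa using mul_nonneg hx₁ (h.j_nonneg le_rfl)
  exact ⟨w, hwr, exists_nonneg_combination_of_det_eq h.n_pos (h.det_eq hwr)
    (h.dvd_mul_j_sub_i (by omega)) (h.dvd_mul_j_sub_i (by omega)) hx hnext
    (Nat.findGreatest_spec (Nat.zero_le r) hP0)⟩

theorem not_le_of_lt_i_of_lt_j {σ k : ℕ} {x₁ x₂ : ℤ} (hσ : σ ≤ r) (hk : k ≤ r + 1)
    (hx₁ : x₁ < i σ) (hx₂ : x₂ < j (σ + 1)) : ¬ (i k ≤ x₁ ∧ j k ≤ x₂) := by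
  rintro ⟨hik, hjk⟩
  rcases le_or_gt k σ with hkσ | hσk
  · linarith [h.i_le_i hkσ (by omega)]
  · linarith [h.j_le_j (Nat.succ_le_of_lt hσk) hk]

theorem eq_zero_of_dvd_of_lt {σ : ℕ} {x₁ x₂ : ℤ} (hσ : σ ≤ r) (hx : n ∣ q * x₂ - x₁)
    (hx₁ : 0 ≤ x₁) (hx₂ : 0 ≤ x₂) (hx₁σ : x₁ < i σ) (hx₂σ : x₂ < j (σ + 1)) :
    x₁ = 0 ∧ x₂ = 0 := by
  obtain ⟨w, hw, α, β, hα, hβ, rfl, rfl⟩ := h.exists_nonneg_combination hx hx₁ hx₂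
  have hi := h.i_nonneg (u := w) (by omega)
  have hi' := h.i_nonneg (u := w + 1) (by omega)
  have hj := h.j_nonneg (u := w) (by omega)
  have hj' := h.j_nonneg (u := w + 1) (by omega)
  have hα0 : α = 0 := by
    by_contra hα0
    refine h.not_le_of_lt_i_of_lt_j hσ (k := w) (by omega) hx₁σ hx₂σ ⟨?_, ?_⟩ <;>
      nlinarith [show 1 ≤ α by omega]
  have hβ0 : β = 0 := by
    by_contra hβ0
    refine h.not_le_of_lt_i_of_lt_j hσ (k := w + 1) (by omega) hx₁σ hx₂σ ⟨?_, ?_⟩ <;>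
      nlinarith [show 1 ≤ β by omega]
  simp [hα0, hβ0]

theorem eq_zero_of_modEq_of_le {σ s : ℕ} {a c : ℤ} (hσ : σ ≤ r) (hsσ : s ≤ σ) (ha : 0 ≤ a)
    (ha' : a < i σ - i (σ + 1)) (hc : 0 ≤ c) (hc' : c < j (σ + 1) - j σ)
    (hmod : i σ + a + c * q ≡ i s [ZMOD n]) : a = 0 ∧ c = 0 := by
  have hd := Int.modEq_iff_dvd.1 hmod
  have hX : n ∣ q * (j (σ + 1) + j s - j σ - c) - (a + i (σ + 1)) := by
    rw [show q * (j (σ + 1) + j s - j σ - c) - (a + i (σ + 1)) = (q * j (σ + 1) - i (σ + 1))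
      + (q * j s - i s) - (q * j σ - i σ) + (i s - (i σ + a + c * q)) by ring]
    exact (((h.dvd_mul_j_sub_i (by omega)).add (h.dvd_mul_j_sub_i (by omega))).sub
      (h.dvd_mul_j_sub_i (by omega))).add hd
  have hjs := h.j_le_j hsσ (by omega)
  have hjs0 := h.j_nonneg (u := s) (by omega)
  have hX₂ : j (σ + 1) + j s - j σ - c = j (σ + 1) := by
    by_contra hne
    have := h.eq_zero_of_dvd_of_lt hσ hX (by linarith [h.i_nonneg (u := σ + 1) (by omega)])
      (by linarith) (by linarith) (lt_of_le_of_ne (by linarith) hne)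
    linarith
  obtain rfl : c = 0 := by linarith
  obtain rfl : s = σ :=
    h.strictMonoOn_j.injOn (mem_Iic.2 (by omega)) (mem_Iic.2 (by omega)) (by linarith)
  have hn : i s - i (s + 1) ≤ n :=
    h.i_zero ▸ by linarith [h.i_le_i (Nat.zero_le s) (by omega), h.i_nonneg (u := s + 1) (by omega)]
  refine ⟨Int.eq_zero_of_dvd_of_nonneg_of_lt ha (ha'.trans_le hn) ?_, rfl⟩
  simpa using hd

theorem not_modEq_of_lt {σ s : ℕ} {a c : ℤ} (hσ : 1 ≤ σ) (hσs : σ < s) (hs : s ≤ r)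
    (ha : 0 ≤ a) (ha' : a < i σ - i (σ + 1)) (hc : 0 ≤ c) (hc' : c < j (σ + 1) - j σ) :
    ¬ i σ + a + c * q ≡ i s [ZMOD n] := by
  intro hmod
  have hX : n ∣ q * (j (σ + 1) - j σ - c) - (a + i (σ + 1) - i s) := by
    rw [show q * (j (σ + 1) - j σ - c) - (a + i (σ + 1) - i s) = (q * j (σ + 1) - i (σ + 1))
      - (q * j σ - i σ) + (i s - (i σ + a + c * q)) by ring]
    exact ((h.dvd_mul_j_sub_i (by omega)).sub (h.dvd_mul_j_sub_i (by omega))).add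
      (Int.modEq_iff_dvd.1 hmod)
  have his := h.i_le_i (show σ + 1 ≤ s by omega) (by omega)
  have his0 := h.i_nonneg (u := s) (by omega)
  have hjσ := h.j_le_j (u := 1) hσ (by omega)
  rw [h.j_one] at hjσ
  have := h.eq_zero_of_dvd_of_lt (σ := σ) (by omega) hX (by linarith) (by linarith) (by linarith)
    (by linarith)
  linarith

end HJData

theorem stmt_7_general
    (n q : ℤ) (r : ℕ)
    (hqn : q < n)
    (i b : ℕ → ℤ)
    (hi0 : i 0 = n) (hi1 : i 1 = q)
    (hrec : ∀ t, 1 ≤ t → t ≤ r → i (t - 1) = b t * i t - i (t + 1))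
    (hlt : ∀ t, 1 ≤ t → t ≤ r → 0 ≤ i (t + 1) ∧ i (t + 1) < i t)
    (hir1 : i (r + 1) = 0)
    (j : ℕ → ℤ) (hj0 : j 0 = 0) (hj1 : j 1 = 1)
    (hjrec : ∀ t, 1 ≤ t → t ≤ r → j (t + 1) = b t * j t - j (t - 1)) :
    ∀ t, 2 ≤ t → t ≤ r + 1 →
      ∀ a bb : ℤ, 0 ≤ a → a < i (t - 1) - i t → 0 ≤ bb → bb < j t - j (t - 1) →
        ((∃ s, s ≤ r ∧ Int.ModEq n (i (t - 1) + a + bb * q) (i s)) ↔ (a = 0 ∧ bb = 0)) := by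
  have h : HJData n q r i b j := ⟨hi0, hi1, hqn, fun t h1 h2 => by linarith [hrec t h1 h2],
    fun t h1 h2 => (hlt t h1 h2).2, hir1, hj0, hj1, hjrec⟩
  intro t ht2 htr a bb ha ha' hbb hbb'
  obtain ⟨σ, rfl⟩ : ∃ σ, t = σ + 1 := ⟨t - 1, by omega⟩
  rw [Nat.add_sub_cancel] at ha' hbb' ⊢
  constructor
  · rintro ⟨s, hs, hmod⟩
    rcases le_or_gt s σ with hsσ | hσs
    · exact h.eq_zero_of_modEq_of_le (by omega) hsσ ha ha' hbb hbb' hmod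
    · exact (h.not_modEq_of_lt (by omega) hσs hs ha ha' hbb hbb' hmod).elim
  · rintro ⟨rfl, rfl⟩
    exact ⟨σ, by omega, by simp [Int.ModEq.refl]⟩

/-- i_{t-1} + a + b·q is special iff a = b = 0. -/
theorem stmt_7
    (n q : ℤ) (r : ℕ)
    (hq : 0 < q) (hqn : q < n) (hcop : IsCoprime q n)
    (hr : 1 ≤ r)
    (i b : ℕ → ℤ)
    (hi0 : i 0 = n) (hi1 : i 1 = q)
    (hrec : ∀ t, 1 ≤ t → t ≤ r → i (t - 1) = b t * i t - i (t + 1))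
    (hlt : ∀ t, 1 ≤ t → t ≤ r → 0 ≤ i (t + 1) ∧ i (t + 1) < i t)
    (hir : i r = 1) (hir1 : i (r + 1) = 0)
    (j : ℕ → ℤ) (hj0 : j 0 = 0) (hj1 : j 1 = 1)
    (hjrec : ∀ t, 1 ≤ t → t ≤ r → j (t + 1) = b t * j t - j (t - 1)) :
    ∀ t, 2 ≤ t → t ≤ r + 1 →
      ∀ a bb : ℤ, 0 ≤ a → a < i (t - 1) - i t → 0 ≤ bb → bb < j t - j (t - 1) →
        ((∃ s, s ≤ r ∧ Int.ModEq n (i (t - 1) + a + bb * q) (i s)) ↔ (a = 0 ∧ bb = 0)) :=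
  stmt_7_general n q r hqn i b hi0 hi1 hrec hlt hir1 j hj0 hj1 hjrec
end

section
/- det C = n; moreover C·(i_1, …, i_r)ᵀ = n·e_1 and C·(j_1, …, j_r)ᵀ = n·e_r, where e_1 and e_r denote the first and last standard basis vectors of ℤ^r. Equivalently, the matrix n·C^{−1} = adj(C) has integer entries, its first column is (i_1, …, i_r) and its last column is (j_1, …, j_r). -/
/-!
The vectors `(i_1, …, i_r)` and `(j_1, …, j_r)` are truncations of solutions of the recurrence
`x_{t-1} + x_{t+1} = b_t x_t`, so `C` maps each of them to the boundary value it lost: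
`C i = i_0 e_1` and `C j = j_{r+1} e_r`. The Casoratian `i_t j_{t+1} - i_{t+1} j_t` is constant,
whence `j_{r+1} = n`. Applying `adj C` to `C i = n e_1` gives `adj(C)_{s,1} n = det C · i_s`.
Deleting the first row and last column of `C` leaves an upper triangular matrix with `-1` on its
diagonal, so `adj(C)_{r,1} = 1`, and `s = r` gives `det C = n`. Cancelling `n` then identifies the
first column of `adj C`, and the last one in the same way.
-/

open Matrix

section

variable {R : Type*} [CommRing R]

def hirzebruchJungMatrix (b : ℕ → R) (r : ℕ) : Matrix (Fin r) (Fin r) R :=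
  Matrix.of fun s t =>
    if s = t then b (s.1 + 1) else if s.1 + 1 = t.1 ∨ t.1 + 1 = s.1 then -1 else 0

theorem hirzebruchJungMatrix_mulVec_apply (b : ℕ → R) (r : ℕ) (x : ℕ → R) (s : Fin r) :
    (hirzebruchJungMatrix b r *ᵥ fun t => x (t.1 + 1)) s =
      b (s.1 + 1) * x (s.1 + 1) - x s.1 - x (s.1 + 2) +
        (if s.1 = 0 then x 0 else 0) + (if s.1 + 1 = r then x (r + 1) else 0) := by
  obtain ⟨s, hs⟩ := s
  simp only [mulVec, dotProduct, hirzebruchJungMatrix, of_apply, Fin.ext_iff]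
  rw [Fin.sum_univ_eq_sum_range (fun t => (if s = t then b (s + 1) else
    if s + 1 = t ∨ t + 1 = s then -1 else 0) * x (t + 1))]
  have hterm : ∀ t ∈ Finset.range r, (if s = t then b (s + 1) else
      if s + 1 = t ∨ t + 1 = s then -1 else 0) * x (t + 1) =
      (if t = s then b (s + 1) * x (s + 1) else 0) - (if t = s + 1 then x (s + 2) else 0)
        - (if t + 1 = s then x s else 0) := by
    intro t _
    split_ifs <;> first | omega | (subst_vars; ring)
  rw [Finset.sum_congr rfl hterm, Finset.sum_sub_distrib, Finset.sum_sub_distrib,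
    Finset.sum_ite_eq', Finset.sum_ite_eq']
  rcases s with _ | s <;>
    simp only [Finset.mem_range, hs, ↓reduceIte, zero_add, Nat.add_right_cancel_iff,
      Finset.sum_ite_eq', Nat.add_eq_zero_iff, one_ne_zero, and_false, Finset.sum_const_zero,
      sub_zero, add_zero] <;>
    split_ifs <;> first | omega | (subst_vars; ring)

def SolvesRecurrence (b : ℕ → R) (r : ℕ) (x : ℕ → R) : Prop :=
  ∀ t, 1 ≤ t → t ≤ r → x (t - 1) + x (t + 1) = b t * x t

theorem SolvesRecurrence.hirzebruchJungMatrix_mulVec {b : ℕ → R} {r : ℕ} {x : ℕ → R}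
    (hx : SolvesRecurrence b r x) (s : Fin r) :
    (hirzebruchJungMatrix b r *ᵥ fun t => x (t.1 + 1)) s =
      (if s.1 = 0 then x 0 else 0) + (if s.1 + 1 = r then x (r + 1) else 0) := by
  have hs := hx (s.1 + 1) (by omega) s.2
  rw [Nat.add_sub_cancel] at hs
  rw [hirzebruchJungMatrix_mulVec_apply]
  linear_combination -hs

theorem SolvesRecurrence.casoratian_eq {b : ℕ → R} {r : ℕ} {x y : ℕ → R}
    (hx : SolvesRecurrence b r x) (hy : SolvesRecurrence b r y) :
    ∀ t ≤ r, x t * y (t + 1) - x (t + 1) * y t = x 0 * y 1 - x 1 * y 0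
  | 0, _ => rfl
  | t + 1, ht => by
    have hxt := hx (t + 1) (by omega) ht
    have hyt := hy (t + 1) (by omega) ht
    rw [Nat.add_sub_cancel] at hxt hyt
    linear_combination casoratian_eq hx hy t (by omega) + x (t + 1) * hyt - y (t + 1) * hxt

theorem Matrix.det_updateRow_zero_single_last {m : ℕ} (A : Matrix (Fin (m + 1)) (Fin (m + 1)) R) :
    (A.updateRow 0 (Pi.single (Fin.last m) 1)).det =
      (-1) ^ m * (A.submatrix Fin.succ Fin.castSucc).det := by
  rw [det_succ_row_zero, Finset.sum_eq_single (Fin.last m)]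
  · congr 2
    · simp
    · ext k l
      simp [Fin.succ_ne_zero]
  · intro j _ hj
    simp [hj]
  · simp

theorem hirzebruchJungMatrix_adjugate_last_zero (b : ℕ → R) (m : ℕ) :
    (hirzebruchJungMatrix b (m + 1)).adjugate (Fin.last m) 0 = 1 := by
  set N := (hirzebruchJungMatrix b (m + 1)).submatrix Fin.succ Fin.castSucc
  have hN : N.BlockTriangular id := by
    intro k l (hlk : l < k)
    rw [Fin.lt_def] at hlk
    simp only [N, submatrix_apply, hirzebruchJungMatrix, of_apply, Fin.ext_iff, Fin.val_succ,
      Fin.val_castSucc]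
    rw [if_neg (by omega), if_neg (by omega)]
  have hdiag : ∀ k, N k k = -1 := by
    intro k
    simp [N, hirzebruchJungMatrix, Fin.ext_iff]
  rw [adjugate_apply, det_updateRow_zero_single_last, det_of_isUpperTriangular hN]
  simp [hdiag, ← mul_pow]

theorem SolvesRecurrence.mulVec_eq_single_zero {b : ℕ → R} {m : ℕ} {x : ℕ → R}
    (hx : SolvesRecurrence b (m + 1) x) (hlast : x (m + 2) = 0) :
    (hirzebruchJungMatrix b (m + 1) *ᵥ fun t => x (t.1 + 1)) = Pi.single 0 (x 0) := by
  ext s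
  rw [hx.hirzebruchJungMatrix_mulVec, hlast, ite_self, add_zero]
  simp only [Pi.single_apply, Fin.ext_iff, Fin.val_zero]

theorem SolvesRecurrence.mulVec_eq_single_last {b : ℕ → R} {m : ℕ} {x : ℕ → R}
    (hx : SolvesRecurrence b (m + 1) x) (hfirst : x 0 = 0) :
    (hirzebruchJungMatrix b (m + 1) *ᵥ fun t => x (t.1 + 1)) =
      Pi.single (Fin.last m) (x (m + 2)) := by
  ext s
  rw [hx.hirzebruchJungMatrix_mulVec, hfirst, ite_self, zero_add]
  simp only [Pi.single_apply, Fin.ext_iff, Fin.val_last, Nat.add_right_cancel_iff]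

theorem Matrix.adjugate_mul_eq_det_mul_of_mulVec_eq_single {n : Type*} [Fintype n] [DecidableEq n]
    {A : Matrix n n R} {v : n → R} {k : n} {c : R} (hv : A *ᵥ v = Pi.single k c) (s : n) :
    A.adjugate s k * c = A.det * v s := by
  have := congrFun (congrArg (A.adjugate *ᵥ ·) hv) s
  simpa [mulVec_mulVec, adjugate_mul, smul_mulVec] using this.symm

theorem Matrix.adjugate_apply_eq_of_mulVec_eq_single_det [IsDomain R] {n : Type*} [Fintype n]
    [DecidableEq n] {A : Matrix n n R} {v : n → R} {k : n} (hv : A *ᵥ v = Pi.single k A.det)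
    (hA : A.det ≠ 0) (s : n) : A.adjugate s k = v s :=
  mul_right_cancel₀ hA <| (adjugate_mul_eq_det_mul_of_mulVec_eq_single hv s).trans (mul_comm _ _)

theorem SolvesRecurrence.det_hirzebruchJungMatrix {b : ℕ → R} {m : ℕ} {x : ℕ → R}
    (hx : SolvesRecurrence b (m + 1) x) (hpen : x (m + 1) = 1) (hlast : x (m + 2) = 0) :
    (hirzebruchJungMatrix b (m + 1)).det = x 0 := by
  have := adjugate_mul_eq_det_mul_of_mulVec_eq_single (hx.mulVec_eq_single_zero hlast) (Fin.last m)
  rwa [hirzebruchJungMatrix_adjugate_last_zero, one_mul, Fin.val_last, hpen, mul_one,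
    eq_comm] at this

end

/-- det C = n, C·i = n·e₁, C·j = n·e_r, and the first and last
columns of adj(C) = n·C⁻¹ are (i_1,…,i_r) and (j_1,…,j_r). -/
theorem stmt_8
    (n q : ℤ) (r : ℕ)
    (hq : 0 < q) (hqn : q < n)
    (hr : 1 ≤ r)
    (i b : ℕ → ℤ)
    (hi0 : i 0 = n)
    (hrec : ∀ t, 1 ≤ t → t ≤ r → i (t - 1) = b t * i t - i (t + 1))
    (hir : i r = 1) (hir1 : i (r + 1) = 0)
    (j : ℕ → ℤ) (hj0 : j 0 = 0) (hj1 : j 1 = 1)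
    (hjrec : ∀ t, 1 ≤ t → t ≤ r → j (t + 1) = b t * j t - j (t - 1))
    (C : Matrix (Fin r) (Fin r) ℤ)
    (hC : ∀ s t : Fin r, C s t =
      if s = t then b (s.1 + 1)
      else if s.1 + 1 = t.1 ∨ t.1 + 1 = s.1 then -1 else 0) :
    C.det = n ∧
    (∀ s : Fin r, (C.mulVec fun t : Fin r => i (t.1 + 1)) s =
      if s.1 = 0 then n else 0) ∧
    (∀ s : Fin r, (C.mulVec fun t : Fin r => j (t.1 + 1)) s =
      if s.1 = r - 1 then n else 0) ∧
    (∀ s : Fin r, C.adjugate s ⟨0, by omega⟩ = i (s.1 + 1)) ∧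
    (∀ s : Fin r, C.adjugate s ⟨r - 1, by omega⟩ = j (s.1 + 1)) := by
  obtain ⟨m, rfl⟩ : ∃ m, r = m + 1 := ⟨r - 1, by omega⟩
  obtain rfl : C = hirzebruchJungMatrix b (m + 1) := Matrix.ext hC
  have hi : SolvesRecurrence b (m + 1) i := fun t ht₁ ht₂ => by linarith [hrec t ht₁ ht₂]
  have hj : SolvesRecurrence b (m + 1) j := fun t ht₁ ht₂ => by linarith [hjrec t ht₁ ht₂]
  have hjr : j (m + 2) = n := by
    have := hi.casoratian_eq hj (m + 1) le_rfl
    rw [hir, hir1, hi0, hj0, hj1] at this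
    linear_combination this
  have hdet := hi.det_hirzebruchJungMatrix hir hir1
  have hCi := hi.mulVec_eq_single_zero hir1
  have hCj := hj.mulVec_eq_single_last hj0
  rw [hi0] at hdet hCi
  rw [hjr] at hCj
  have hn : n ≠ 0 := by omega
  refine ⟨hdet, fun s => ?_, fun s => ?_, adjugate_apply_eq_of_mulVec_eq_single_det
    (hdet ▸ hCi) (hdet ▸ hn), adjugate_apply_eq_of_mulVec_eq_single_det (hdet ▸ hCj) (hdet ▸ hn)⟩
  · simp only [hCi, Pi.single_apply, Fin.ext_iff, Fin.val_zero]
  · simp only [hCj, Pi.single_apply, Fin.ext_iff, Fin.val_last, Nat.add_sub_cancel]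
end

section
/- Suppose a ≥ 0, b ≥ 0 and c < 0 are integers, and (e_1, …, e_r) are non-negative integers solving the associated linear system for (f, g, a, b, c) (with e_0 = b and e_{r+1} = a). Define e''_t = e_{t−1} − 2e_t + e_{t+1} for 1 ≤ t ≤ r. Then: (1) e''_t ≥ −1 for every t ∈ {1, …, r}; (2) if e''_s = e''_t = −1 for some 1 ≤ s < t ≤ r, then there exists l with s < l < t and e''_l ≥ 1; (3) there exists t_0 ∈ {0, 1, …, r+1} such that e_0 ≥ e_1 ≥ ⋯ ≥ e_{t_0} ≤ e_{t_0+1} ≤ ⋯ ≤ e_{r+1}. -/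
/-!
Write `e''_t = e_(t-1) - 2 e_t + e_(t+1)`. The linear system gives
`e''_t = (b_t - 2)(e_t - c) + g_t - f_t ≥ b_t - 2 - f_t`, because `b_t ≥ 2` and `e_t - c ≥ 1`.
A Wunram digit satisfies `f_t ≤ b_t - 1`, which gives (1), and `e''_t = -1` forces `f_t = b_t - 1`.
Two such maximal digits at `s < t` must be separated by a digit `f_l ≤ b_l - 3` (else the tail
`∑_{u ≥ s} f_u i_u` would reach `i_(s-1)`), and there `e''_l ≥ 1`: this is (2).
By (1) and (2) every sum of consecutive `e''_t` is `≥ -1`, so the first differences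
`e_(t+1) - e_t` never drop by more than one; once positive they stay nonnegative, which is (3).
-/

open Finset

def secondDiff (e : ℕ → ℤ) (t : ℕ) : ℤ := e (t - 1) - 2 * e t + e (t + 1)

theorem sum_Ioc_secondDiff (e : ℕ → ℤ) {v u : ℕ} (h : v ≤ u) :
    ∑ l ∈ Ioc v u, secondDiff e l = (e (u + 1) - e u) - (e (v + 1) - e v) := by
  induction u, h using Nat.le_induction with
  | base => simp
  | succ u hvu ih =>
    rw [sum_Ioc_succ_top hvu, ih, secondDiff, Nat.add_sub_cancel]
    ring

theorem neg_one_le_sum_of_unique_neg_one {ι : Type*} [DecidableEq ι] {s : Finset ι} {x : ι → ℤ}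
    (hlow : ∀ q ∈ s, -1 ≤ x q) (hunique : ∀ p ∈ s, ∀ q ∈ s, x p = -1 → x q = -1 → p = q) :
    -1 ≤ ∑ q ∈ s, x q := by
  by_cases hone : ∃ p ∈ s, x p = -1
  · obtain ⟨p, hp, hxp⟩ := hone
    have : 0 ≤ ∑ q ∈ s.erase p, x q := sum_nonneg fun q hq => by
      obtain ⟨hqp, hq⟩ := mem_erase.1 hq
      have := hlow q hq
      have := mt (hunique p hp q hq hxp) hqp.symm
      omega
    rw [← add_sum_erase _ _ hp]
    linarith
  · push Not at hone
    have : 0 ≤ ∑ q ∈ s, x q := sum_nonneg fun q hq => by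
      have := hlow q hq
      have := hone q hq
      omega
    linarith

theorem neg_one_le_sum_Ioc {x : ℕ → ℤ} {r : ℕ}
    (hlow : ∀ t, 1 ≤ t → t ≤ r → -1 ≤ x t)
    (hsep : ∀ s t, 1 ≤ s → s < t → t ≤ r → x s = -1 → x t = -1 →
      ∃ l, s < l ∧ l < t ∧ 1 ≤ x l) :
    ∀ v u, u ≤ r → -1 ≤ ∑ l ∈ Ioc v u, x l := by
  intro v u hur
  induction hn : u - v using Nat.strong_induction_on generalizing v u with
  | _ n ih =>
  have hmem : ∀ q ∈ Ioc v u, 1 ≤ q ∧ q ≤ r := fun q hq => by rw [mem_Ioc] at hq; omega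
  by_cases hpair : ∃ p ∈ Ioc v u, ∃ p' ∈ Ioc v u, p < p' ∧ x p = -1 ∧ x p' = -1
  · obtain ⟨p, hp, p', hp', hpp', hxp, hxp'⟩ := hpair
    rw [mem_Ioc] at hp hp'
    obtain ⟨l, hpl, hlp', hxl⟩ := hsep p p' (by omega) hpp' (by omega) hxp hxp'
    obtain ⟨m, rfl⟩ : ∃ m, l = m + 1 := ⟨l - 1, by omega⟩
    have hleft := ih (m - v) (by omega) v m (by omega) rfl
    have hright := ih (u - (m + 1)) (by omega) (m + 1) u hur rfl
    rw [← sum_Ioc_consecutive _ (by omega : v ≤ m + 1) (by omega : m + 1 ≤ u),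
      sum_Ioc_succ_top (by omega)]
    linarith
  · push Not at hpair
    refine neg_one_le_sum_of_unique_neg_one (fun q hq => hlow q (hmem q hq).1 (hmem q hq).2) ?_
    intro p hp q hq hxp hxq
    by_contra hpq
    rcases lt_or_gt_of_ne hpq with hpq | hqp
    · exact hpair p hp q hq hpq hxp hxq
    · exact hpair q hq p hp hqp hxq hxp

theorem exists_antitone_then_monotone {e : ℕ → ℤ} {r : ℕ}
    (h : ∀ v u, v < u → u ≤ r → e (v + 1) - e v - 1 ≤ e (u + 1) - e u) :
    ∃ t0, t0 ≤ r + 1 ∧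
      (∀ t, t + 1 ≤ t0 → e (t + 1) ≤ e t) ∧
      (∀ t, t0 ≤ t → t ≤ r → e t ≤ e (t + 1)) := by
  classical
  by_cases hup : ∃ t, t ≤ r ∧ e t < e (t + 1)
  · refine ⟨Nat.find hup, by have := (Nat.find_spec hup).1; omega, fun t ht => ?_, fun t ht htr => ?_⟩
    · have := Nat.find_min hup (show t < Nat.find hup by omega)
      push Not at this
      exact this (by have := (Nat.find_spec hup).1; omega)
    · rcases ht.eq_or_lt with rfl | ht
      · exact (Nat.find_spec hup).2.le
      · linarith [h _ t ht htr, (Nat.find_spec hup).2]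
  · push Not at hup
    exact ⟨r + 1, le_rfl, fun t ht => hup t (by omega), fun t h1 h2 => by omega⟩

namespace HirzebruchJung

variable {i b : ℕ → ℤ} {r : ℕ}
  (hrec : ∀ t, 1 ≤ t → t ≤ r → i (t - 1) = b t * i t - i (t + 1))
  (hdec : ∀ t ≤ r, 0 ≤ i (t + 1) ∧ i (t + 1) < i t)
include hrec hdec

theorem two_le_coeff {t : ℕ} (h1 : 1 ≤ t) (h2 : t ≤ r) : 2 ≤ b t := by
  have hprev := (hdec (t - 1) (by omega)).2
  rw [Nat.sub_add_cancel h1] at hprev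
  have hnext := hdec t h2
  have : 1 * i t < b t * i t := by linarith [hrec t h1 h2]
  have := lt_of_mul_lt_mul_right this (by linarith)
  omega

variable {w : ℕ → ℤ}
  (htail : ∀ t0, t0 ≤ r → 0 ≤ ∑ t ∈ Ioc t0 r, w t * i t ∧ ∑ t ∈ Ioc t0 r, w t * i t < i t0)
include htail

theorem digit_le_coeff_sub_one {t : ℕ} (h1 : 1 ≤ t) (h2 : t ≤ r) : w t ≤ b t - 1 := by
  obtain ⟨m, rfl⟩ : ∃ m, t = m + 1 := ⟨t - 1, by omega⟩
  have hsplit := sum_Ioc_consecutive (fun t => w t * i t) (by omega : m ≤ m + 1) h2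
  rw [Nat.Ioc_succ_singleton, sum_singleton] at hsplit
  have hrec' := hrec (m + 1) h1 h2
  rw [Nat.add_sub_cancel] at hrec'
  have hnext := hdec (m + 1) h2
  have : w (m + 1) * i (m + 1) < b (m + 1) * i (m + 1) := by
    linarith [(htail m (by omega)).2, (htail (m + 1) h2).1]
  have := lt_of_mul_lt_mul_right this (by linarith)
  omega

theorem exists_digit_lt_between {s t : ℕ} (hs : 1 ≤ s) (hst : s < t) (ht : t ≤ r)
    (hws : w s = b s - 1) (hwt : w t = b t - 1) : ∃ l, s < l ∧ l < t ∧ w l < b l - 2 := by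
  by_contra! hbetween
  have hipos : ∀ l ∈ Ioc (s - 1) t, 0 ≤ i l := fun l hl => by
    rw [mem_Ioc] at hl
    have := hdec l (by omega)
    omega
  have hexcess : i s + i t ≤ ∑ l ∈ Ioc (s - 1) t, (w l * i l - (b l - 2) * i l) := by
    have hsub : {s, t} ⊆ Ioc (s - 1) t := by
      intro l hl
      simp only [mem_insert, mem_singleton] at hl
      rw [mem_Ioc]
      omega
    calc i s + i t = ∑ l ∈ {s, t}, (w l * i l - (b l - 2) * i l) := by
          rw [sum_pair hst.ne, hws, hwt]; ring
      _ ≤ _ := sum_le_sum_of_subset_of_nonneg hsub fun l hl _ => by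
          rw [← sub_mul]
          refine mul_nonneg ?_ (hipos l hl)
          rw [mem_Ioc] at hl
          rcases (show l = s ∨ l = t ∨ (s < l ∧ l < t) by omega) with rfl | rfl | ⟨h1, h2⟩
          · omega
          · omega
          · linarith [hbetween l h1 h2]
  -- `(b l - 2) * i l` is the second difference of `i`, by the recursion
  have htele : ∑ l ∈ Ioc (s - 1) t, (b l - 2) * i l = (i (t + 1) - i t) - (i s - i (s - 1)) := by
    rw [← Nat.sub_add_cancel hs, Nat.add_sub_cancel, ← sum_Ioc_secondDiff i (by omega)]
    refine sum_congr rfl fun l hl => ?_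
    rw [mem_Ioc] at hl
    rw [secondDiff, hrec l (by omega) (by omega)]
    ring
  have hsplit := sum_Ioc_consecutive (fun l => w l * i l) (by omega : s - 1 ≤ t) ht
  rw [sum_sub_distrib] at hexcess
  have := hdec t ht
  linarith [(htail (s - 1) (by omega)).2, (htail t ht).1]

end HirzebruchJung

theorem stmt_10_general
    (n q : ℤ) (r : ℕ)
    (hq : 0 < q) (hqn : q < n)
    (i b : ℕ → ℤ)
    (hi0 : i 0 = n) (hi1 : i 1 = q)
    (hrec : ∀ t, 1 ≤ t → t ≤ r → i (t - 1) = b t * i t - i (t + 1))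
    (hlt : ∀ t, 1 ≤ t → t ≤ r → 0 ≤ i (t + 1) ∧ i (t + 1) < i t)
    -- f, g and their Wunram expansions
    (ff : ℕ → ℤ)
    (hftail : ∀ t0, t0 ≤ r →
      0 ≤ ∑ t ∈ Finset.Icc (t0 + 1) r, ff t * i t ∧
      ∑ t ∈ Finset.Icc (t0 + 1) r, ff t * i t < i t0)
    (gg : ℕ → ℤ)
    (hggnn : ∀ t, 1 ≤ t → t ≤ r → 0 ≤ gg t)
    -- a ≥ 0, b ≥ 0, c < 0 and a nonnegative solution (e_t) of the linear system
    (c : ℤ) (hc : c < 0)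
    (e : ℕ → ℤ)
    (henn : ∀ t, 1 ≤ t → t ≤ r → 0 ≤ e t)
    (hesys : ∀ t, 1 ≤ t → t ≤ r →
      e (t - 1) - b t * e t + e (t + 1) = gg t - ff t - (b t - 2) * c) :
    (∀ t, 1 ≤ t → t ≤ r → -1 ≤ e (t - 1) - 2 * e t + e (t + 1)) ∧
    (∀ s t, 1 ≤ s → s < t → t ≤ r →
      e (s - 1) - 2 * e s + e (s + 1) = -1 →
      e (t - 1) - 2 * e t + e (t + 1) = -1 →
      ∃ l, s < l ∧ l < t ∧ 1 ≤ e (l - 1) - 2 * e l + e (l + 1)) ∧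
    (∃ t0, t0 ≤ r + 1 ∧
      (∀ t, t + 1 ≤ t0 → e (t + 1) ≤ e t) ∧
      (∀ t, t0 ≤ t → t ≤ r → e t ≤ e (t + 1))) := by
  simp only [Icc_add_one_left_eq_Ioc] at hftail
  have hdec : ∀ t ≤ r, 0 ≤ i (t + 1) ∧ i (t + 1) < i t := by
    rintro (_ | t) ht
    · rw [hi0, hi1]; exact ⟨hq.le, hqn⟩
    · exact hlt (t + 1) (by omega) ht
  have hge : ∀ t, 1 ≤ t → t ≤ r → b t - 2 - ff t ≤ secondDiff e t := fun t h1 h2 => by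
    have hb := HirzebruchJung.two_le_coeff hrec hdec h1 h2
    have := mul_le_mul_of_nonneg_left (show 1 ≤ e t - c by linarith [henn t h1 h2])
      (sub_nonneg.2 hb)
    rw [secondDiff]
    linarith [hesys t h1 h2, hggnn t h1 h2]
  have hdigit : ∀ t, 1 ≤ t → t ≤ r → ff t ≤ b t - 1 := fun t h1 h2 =>
    HirzebruchJung.digit_le_coeff_sub_one hrec hdec hftail h1 h2
  have part1 : ∀ t, 1 ≤ t → t ≤ r → -1 ≤ secondDiff e t := fun t h1 h2 => by
    linarith [hge t h1 h2, hdigit t h1 h2]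
  have part2 : ∀ s t, 1 ≤ s → s < t → t ≤ r → secondDiff e s = -1 → secondDiff e t = -1 →
      ∃ l, s < l ∧ l < t ∧ 1 ≤ secondDiff e l := by
    intro s t hs hst ht hes het
    obtain ⟨l, hsl, hlt', hl⟩ := HirzebruchJung.exists_digit_lt_between hrec hdec hftail hs hst ht
      (by linarith [hge s hs (by omega), hdigit s hs (by omega)])
      (by linarith [hge t (by omega) ht, hdigit t (by omega) ht])
    exact ⟨l, hsl, hlt', by linarith [hge l (by omega) (by omega), hl]⟩
  refine ⟨part1, part2, exists_antitone_then_monotone fun v u hvu hur => ?_⟩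
  have := neg_one_le_sum_Ioc part1 part2 v u hur
  rw [sum_Ioc_secondDiff e hvu.le] at this
  linarith

/-- Corollary on near-convexity of solutions to the linear system. -/
theorem stmt_10
    (n q : ℤ) (r : ℕ)
    (hq : 0 < q) (hqn : q < n) (hcop : IsCoprime q n)
    (hr : 1 ≤ r)
    (i b : ℕ → ℤ)
    (hi0 : i 0 = n) (hi1 : i 1 = q)
    (hrec : ∀ t, 1 ≤ t → t ≤ r → i (t - 1) = b t * i t - i (t + 1))
    (hlt : ∀ t, 1 ≤ t → t ≤ r → 0 ≤ i (t + 1) ∧ i (t + 1) < i t)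
    (hir : i r = 1) (hir1 : i (r + 1) = 0)
    -- f, g and their Wunram expansions
    (f g : ℤ) (hf0 : 0 ≤ f) (hfn : f ≤ n - 1) (hg0 : 0 ≤ g) (hgn : g ≤ n - 1)
    (ff : ℕ → ℤ)
    (hffnn : ∀ t, 1 ≤ t → t ≤ r → 0 ≤ ff t)
    (hfsum : f = ∑ t ∈ Finset.Icc 1 r, ff t * i t)
    (hftail : ∀ t0, t0 ≤ r →
      0 ≤ ∑ t ∈ Finset.Icc (t0 + 1) r, ff t * i t ∧
      ∑ t ∈ Finset.Icc (t0 + 1) r, ff t * i t < i t0)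
    (gg : ℕ → ℤ)
    (hggnn : ∀ t, 1 ≤ t → t ≤ r → 0 ≤ gg t)
    (hgsum : g = ∑ t ∈ Finset.Icc 1 r, gg t * i t)
    (hgtail : ∀ t0, t0 ≤ r →
      0 ≤ ∑ t ∈ Finset.Icc (t0 + 1) r, gg t * i t ∧
      ∑ t ∈ Finset.Icc (t0 + 1) r, gg t * i t < i t0)
    -- a ≥ 0, b ≥ 0, c < 0 and a nonnegative solution (e_t) of the linear system
    (a bb c : ℤ) (ha : 0 ≤ a) (hbb : 0 ≤ bb) (hc : c < 0)
    (e : ℕ → ℤ)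
    (he0 : e 0 = bb) (her1 : e (r + 1) = a)
    (henn : ∀ t, 1 ≤ t → t ≤ r → 0 ≤ e t)
    (hesys : ∀ t, 1 ≤ t → t ≤ r →
      e (t - 1) - b t * e t + e (t + 1) = gg t - ff t - (b t - 2) * c) :
    (∀ t, 1 ≤ t → t ≤ r → -1 ≤ e (t - 1) - 2 * e t + e (t + 1)) ∧
    (∀ s t, 1 ≤ s → s < t → t ≤ r →
      e (s - 1) - 2 * e s + e (s + 1) = -1 →
      e (t - 1) - 2 * e t + e (t + 1) = -1 →
      ∃ l, s < l ∧ l < t ∧ 1 ≤ e (l - 1) - 2 * e l + e (l + 1)) ∧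
    (∃ t0, t0 ≤ r + 1 ∧
      (∀ t, t + 1 ≤ t0 → e (t + 1) ≤ e t) ∧
      (∀ t, t0 ≤ t → t ≤ r → e t ≤ e (t + 1))) :=
  stmt_10_general n q r hq hqn i b hi0 hi1 hrec hlt ff hftail gg hggnn c hc e henn hesys
end

section
/- Let t ∈ {2, …, r+1} and let d be an integer with 0 ≤ d < j_t − j_{t−1}. Then the dual Wunram expansion (d_1, …, d_r) of d satisfies: d_k = 0 for every k ≥ t; d_{t−1} ≤ b_{t−1} − 2; and whenever d_k = b_k − 1 for some k < t−1, there exists l with k < l ≤ t−1 and d_l ≤ b_l − 3. -/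
/-!
Since `i` strictly decreases, every `b_m` is at least `2`, so the gaps `j_{m+1} - j_m` never
shrink and `j` is strictly increasing. A nonzero digit at a position `k ≥ t` would therefore
already exceed `d < j_t`. For the other two claims, a digit `d_k = b_k - 1` followed by digits
`d_l ≥ b_l - 2` for `k < l ≤ m` makes the partial sum up to `m` at least `j_{m+1} - j_m`, because
`(b_l - 2) j_l` is exactly the growth of the gap at `l`; with `m = t - 1` this contradicts
`d < j_t - j_{t-1}`.
-/

section HirzebruchJung

variable {r : ℕ} {b : ℕ → ℤ}

lemma two_le_of_remainders {n q : ℤ} (hqn : q < n) {i : ℕ → ℤ} (hi0 : i 0 = n) (hi1 : i 1 = q)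
    (hrec : ∀ t, 1 ≤ t → t ≤ r → i (t - 1) = b t * i t - i (t + 1))
    (hlt : ∀ t, 1 ≤ t → t ≤ r → 0 ≤ i (t + 1) ∧ i (t + 1) < i t) :
    ∀ m, 1 ≤ m → m ≤ r → 2 ≤ b m := by
  intro m hm1 hmr
  have hdec : i m < i (m - 1) := by
    rcases Nat.eq_or_lt_of_le hm1 with rfl | hm
    · simpa [hi0, hi1] using hqn
    · simpa [Nat.sub_add_cancel hm1] using (hlt (m - 1) (by omega) (by omega)).2
  obtain ⟨hnext_nonneg, hnext_lt⟩ := hlt m hm1 hmr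
  have hrm := hrec m hm1 hmr
  by_contra! hb
  nlinarith [mul_le_mul_of_nonneg_right (show b m ≤ 1 by omega) (hnext_nonneg.trans hnext_lt.le)]

variable {j : ℕ → ℤ} (hb : ∀ m, 1 ≤ m → m ≤ r → 2 ≤ b m) (hj0 : j 0 = 0) (hj1 : j 1 = 1)
  (hjrec : ∀ t, 1 ≤ t → t ≤ r → j (t + 1) = b t * j t - j (t - 1))
include hb hj0 hj1 hjrec

lemma dual_nonneg_and_lt_succ : ∀ m, m ≤ r → 0 ≤ j m ∧ j m < j (m + 1) := by
  intro m
  induction m with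
  | zero => intro _; simp [hj0, hj1]
  | succ m ih =>
    intro hm
    obtain ⟨hjm, hjm_lt⟩ := ih (by omega)
    have hrm := hjrec (m + 1) (by omega) hm
    have hbm := hb (m + 1) (by omega) hm
    simp only [Nat.add_sub_cancel] at hrm
    refine ⟨by linarith, ?_⟩
    nlinarith [mul_le_mul_of_nonneg_right hbm (show (0 : ℤ) ≤ j (m + 1) by linarith)]

lemma dual_mono {a c : ℕ} (hac : a ≤ c) (hc : c ≤ r + 1) : j a ≤ j c := by
  induction c, hac using Nat.le_induction with
  | base => rfl
  | succ c _ ih =>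
    exact (ih (by omega)).trans (dual_nonneg_and_lt_succ hb hj0 hj1 hjrec c (by omega)).2.le

lemma dual_nonneg {m : ℕ} (hm : m ≤ r + 1) : 0 ≤ j m := by
  simpa [hj0] using dual_mono hb hj0 hj1 hjrec (Nat.zero_le m) hm

variable {dd : ℕ → ℤ} (hdd : ∀ k, 1 ≤ k → k ≤ r → 0 ≤ dd k)
include hdd

lemma digit_eq_zero_of_sum_lt {t : ℕ} (ht : 1 ≤ t) (hsum : ∑ k ∈ Finset.Icc 1 r, dd k * j k < j t) :
    ∀ k, t ≤ k → k ≤ r → dd k = 0 := by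
  intro k htk hkr
  by_contra hk
  have hk1 : 1 ≤ dd k := by have := hdd k (by omega) hkr; omega
  have hjk := dual_nonneg hb hj0 hj1 hjrec (m := k) (by omega)
  have hterm : dd k * j k ≤ ∑ k ∈ Finset.Icc 1 r, dd k * j k :=
    Finset.single_le_sum
      (fun l hl => mul_nonneg (hdd l (Finset.mem_Icc.1 hl).1 (Finset.mem_Icc.1 hl).2)
        (dual_nonneg hb hj0 hj1 hjrec (by have := (Finset.mem_Icc.1 hl).2; omega)))
      (Finset.mem_Icc.2 ⟨by omega, hkr⟩)
  nlinarith [dual_mono hb hj0 hj1 hjrec htk (by omega : k ≤ r + 1)]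

lemma sum_Ico_nonneg {m : ℕ} (hm : m ≤ r + 1) : 0 ≤ ∑ l ∈ Finset.Ico 1 m, dd l * j l :=
  Finset.sum_nonneg fun l hl => by
    obtain ⟨hl1, hlm⟩ := Finset.mem_Ico.1 hl
    exact mul_nonneg (hdd l hl1 (by omega)) (dual_nonneg hb hj0 hj1 hjrec (by omega))

lemma sum_Ico_le_sum_Icc {m : ℕ} (hm : m ≤ r + 1) :
    ∑ l ∈ Finset.Ico 1 m, dd l * j l ≤ ∑ l ∈ Finset.Icc 1 r, dd l * j l := by
  apply Finset.sum_le_sum_of_subset_of_nonneg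
  · intro l hl
    obtain ⟨hl1, hlm⟩ := Finset.mem_Ico.1 hl
    exact Finset.mem_Icc.2 ⟨hl1, by omega⟩
  · intro l hl _
    obtain ⟨hl1, hlr⟩ := Finset.mem_Icc.1 hl
    exact mul_nonneg (hdd l hl1 hlr) (dual_nonneg hb hj0 hj1 hjrec (by omega))

lemma dual_gap_le_sum_Ico {k m : ℕ} (hk : 1 ≤ k) (hkm : k ≤ m) (hmr : m ≤ r)
    (hdk : b k - 1 ≤ dd k) (hdl : ∀ l, k < l → l ≤ m → b l - 2 ≤ dd l) :
    j (m + 1) - j m ≤ ∑ l ∈ Finset.Ico 1 (m + 1), dd l * j l := by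
  induction m, hkm using Nat.le_induction with
  | base =>
    rw [Finset.sum_Ico_succ_top hk]
    have hjr := hjrec k hk hmr
    have hjk := dual_nonneg hb hj0 hj1 hjrec (m := k) (by omega)
    nlinarith [sum_Ico_nonneg hb hj0 hj1 hjrec hdd (m := k) (by omega),
      dual_nonneg hb hj0 hj1 hjrec (m := k - 1) (by omega),
      mul_le_mul_of_nonneg_right hdk hjk]
  | succ m hkm ih =>
    rw [Finset.sum_Ico_succ_top (by omega)]
    have hjr := hjrec (m + 1) (by omega) hmr
    simp only [Nat.add_sub_cancel] at hjr
    nlinarith [ih (by omega) (fun l hl1 hl2 => hdl l hl1 (by omega)),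
      mul_le_mul_of_nonneg_right (hdl (m + 1) (by omega) le_rfl)
        (dual_nonneg hb hj0 hj1 hjrec (m := m + 1) (by omega))]

end HirzebruchJung

theorem stmt_15_general
    (n q : ℤ) (r : ℕ)
    (hqn : q < n)
    (i b : ℕ → ℤ)
    (hi0 : i 0 = n) (hi1 : i 1 = q)
    (hrec : ∀ t, 1 ≤ t → t ≤ r → i (t - 1) = b t * i t - i (t + 1))
    (hlt : ∀ t, 1 ≤ t → t ≤ r → 0 ≤ i (t + 1) ∧ i (t + 1) < i t)
    (j : ℕ → ℤ) (hj0 : j 0 = 0) (hj1 : j 1 = 1)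
    (hjrec : ∀ t, 1 ≤ t → t ≤ r → j (t + 1) = b t * j t - j (t - 1))
    (t : ℕ) (ht2 : 2 ≤ t) (htr : t ≤ r + 1)
    (d : ℤ) (hd : d < j t - j (t - 1))
    (dd : ℕ → ℤ)
    (hddnn : ∀ k, 1 ≤ k → k ≤ r → 0 ≤ dd k)
    (hdsum : d = ∑ k ∈ Finset.Icc 1 r, dd k * j k) :
    (∀ k, t ≤ k → k ≤ r → dd k = 0) ∧
    dd (t - 1) ≤ b (t - 1) - 2 ∧
    (∀ k, 1 ≤ k → k < t - 1 → dd k = b k - 1 →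
      ∃ l, k < l ∧ l ≤ t - 1 ∧ dd l ≤ b l - 3) := by
  have hb := two_le_of_remainders hqn hi0 hi1 hrec hlt
  obtain ⟨u, rfl⟩ : ∃ u, t = u + 1 := ⟨t - 1, by omega⟩
  simp only [Nat.add_sub_cancel] at hd ⊢
  have hprefix : ∑ l ∈ Finset.Ico 1 (u + 1), dd l * j l ≤ d :=
    hdsum ▸ sum_Ico_le_sum_Icc hb hj0 hj1 hjrec hddnn htr
  have hd_lt : d < j (u + 1) := by linarith [dual_nonneg hb hj0 hj1 hjrec (m := u) (by omega)]
  refine ⟨digit_eq_zero_of_sum_lt hb hj0 hj1 hjrec hddnn (by omega) (hdsum ▸ hd_lt), ?_, ?_⟩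
  · by_contra! hdu
    linarith [dual_gap_le_sum_Ico hb hj0 hj1 hjrec hddnn (k := u) (by omega) le_rfl (by omega)
      (by omega) (fun l hl1 hl2 => by omega)]
  · intro k hk1 hku hdk
    by_contra! hdl
    linarith [dual_gap_le_sum_Ico hb hj0 hj1 hjrec hddnn hk1 hku.le (by omega) hdk.ge
      (fun l hl1 hl2 => by linarith [hdl l hl1 hl2])]

/-- Shape of the dual Wunram expansion of 0 ≤ d < j_t − j_{t−1}. -/
theorem stmt_15
    (n q : ℤ) (r : ℕ)
    (hq : 0 < q) (hqn : q < n) (hcop : IsCoprime q n)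
    (hr : 1 ≤ r)
    (i b : ℕ → ℤ)
    (hi0 : i 0 = n) (hi1 : i 1 = q)
    (hrec : ∀ t, 1 ≤ t → t ≤ r → i (t - 1) = b t * i t - i (t + 1))
    (hlt : ∀ t, 1 ≤ t → t ≤ r → 0 ≤ i (t + 1) ∧ i (t + 1) < i t)
    (hir : i r = 1) (hir1 : i (r + 1) = 0)
    (j : ℕ → ℤ) (hj0 : j 0 = 0) (hj1 : j 1 = 1)
    (hjrec : ∀ t, 1 ≤ t → t ≤ r → j (t + 1) = b t * j t - j (t - 1))
    (t : ℕ) (ht2 : 2 ≤ t) (htr : t ≤ r + 1)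
    (d : ℤ) (hd0 : 0 ≤ d) (hd : d < j t - j (t - 1))
    (dd : ℕ → ℤ)
    (hddnn : ∀ k, 1 ≤ k → k ≤ r → 0 ≤ dd k)
    (hdsum : d = ∑ k ∈ Finset.Icc 1 r, dd k * j k)
    (hdhead : ∀ t0, 1 ≤ t0 → t0 ≤ r + 1 →
      0 ≤ ∑ k ∈ Finset.Ico 1 t0, dd k * j k ∧
      ∑ k ∈ Finset.Ico 1 t0, dd k * j k < j t0) :
    (∀ k, t ≤ k → k ≤ r → dd k = 0) ∧
    dd (t - 1) ≤ b (t - 1) - 2 ∧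
    (∀ k, 1 ≤ k → k < t - 1 → dd k = b k - 1 →
      ∃ l, k < l ∧ l ≤ t - 1 ∧ dd l ≤ b l - 3) :=
  stmt_15_general n q r hqn i b hi0 hi1 hrec hlt j hj0 hj1 hjrec t ht2 htr d hd dd hddnn hdsum
end
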